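/- For every a ∈ F_q^*, 3 · #{ w ∈ SO^-(2,q) : tr(a·Tr(w)) ≠ 0 } = 2·(q + 1 + K(λ; a²)), and likewise 3 · #{ w ∈ O^-(2,q) : tr(a·Tr(w)) ≠ 0 } = 2·(q + 1 + K(λ; a²)). Equivalently, the Hamming weight of the codeword c(a) = (tr(a·Tr g₁), ..., tr(a·Tr g_N)) in the dual code, for G = SO^-(2,q) or G = O^-(2,q), equals (2/3)·(q + 1 + K(λ; a²)). -/

import Mathlib

open Matrix
open scoped BigOperators Classical

noncomputable section

abbrev Fq (r : ℕ) : Type := GaloisField 3 r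
noncomputable instance (r : ℕ) : Fintype (Fq r) := Fintype.ofFinite _

def lam (r : ℕ) (x : Fq r) : ℂ :=
  Complex.exp (2 * Real.pi * Complex.I * ((Algebra.trace (ZMod 3) (Fq r) x).val : ℂ) / 3)

def Kl (r : ℕ) (a : Fq r) : ℂ :=
  ∑ α ∈ Finset.univ.filter (fun α : Fq r => α ≠ 0), lam r (α + a * α⁻¹)

def SOminus2 (r : ℕ) (ε : Fq r) : Finset (Matrix (Fin 2) (Fin 2) (Fq r)) :=
  Finset.univ.filter (fun w => ∃ a b : Fq r, a ^ 2 - ε * b ^ 2 = 1 ∧ w = !![a, b * ε; b, a])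

def deltaEps (r : ℕ) (ε : Fq r) : Matrix (Fin 2) (Fin 2) (Fq r) := !![1, 0; 0, -ε]

def Ominus2 (r : ℕ) (ε : Fq r) : Finset (Matrix (Fin 2) (Fin 2) (Fq r)) :=
  Finset.univ.filter (fun w => IsUnit w.det ∧ wᵀ * deltaEps r ε * w = deltaEps r ε)

/-!
In characteristic 3 one has `3 · [tr y ≠ 0] = 2 - λ(y) - λ(-y)`, so
`3 · #{w ∈ SO⁻ | tr(a Tr w) ≠ 0} = 2 · #SO⁻ - Σ_w λ(a Tr w) - Σ_w λ(-a Tr w)`.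

An element of `SO⁻(2,q)` of trace `t` is `[[-t, bε], [b, -t]]` with `ε b² = t² - 4`, so there
are `1 + χ(ε (t² - 4))` of them, while `β + β⁻¹ = t` has `1 + χ(t² - 4)` solutions `β ≠ 0`
(`χ` the quadratic character). As `χ(ε) = -1`, the two counts add up to `2` for every `t`, hence
`Σ_{w ∈ SO⁻} f(Tr w) + Σ_{β ≠ 0} f(β + β⁻¹) = 2 Σ_t f(t)` for every `f`. Taking `f = 1` gives
`#SO⁻ = q + 1`; taking `f = λ(c ·)`, whose total sum vanishes, gives
`Σ_w λ(c Tr w) = -K(λ; c²)` after the substitution `α = c β` in the Kloosterman sum.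

An element of `O⁻(2,q)` outside `SO⁻(2,q)` has determinant `-1`, hence trace `0`, so it does not
contribute to the weight.
-/

open Finset

section QuadraticCount

variable {F : Type*} [Field F] [Fintype F]

theorem card_filter_sq_eq (hF : ringChar F ≠ 2) (c : F) :
    (#{y : F | y ^ 2 = c} : ℤ) = quadraticChar F c + 1 := by
  rw [← quadraticChar_card_sqrts hF c, Set.toFinset_ofPred]

theorem card_filter_mul_sq_eq (hF : ringChar F ≠ 2) {ε : F} (hε : ε ≠ 0) (c : F) :
    (#{b : F | ε * b ^ 2 = c} : ℤ) = quadraticChar F (ε * c) + 1 := by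
  rw [← card_filter_sq_eq hF]
  congr 1
  refine card_nbij' (ε * ·) (ε⁻¹ * ·) ?_ ?_ ?_ ?_ <;> intro b hb <;>
    simp only [coe_filter, mem_univ, true_and, Set.mem_ofPred_eq] at hb ⊢
  · rw [← hb]; ring
  · field_simp; linear_combination hb
  · field_simp
  · field_simp

theorem card_filter_add_inv_eq (hF : ringChar F ≠ 2) (t : F) :
    (#{β : F | β ≠ 0 ∧ β + β⁻¹ = t} : ℤ) = quadraticChar F (t ^ 2 - 4) + 1 := by
  have h2 : (2 : F) ≠ 0 := Ring.two_ne_zero hF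
  rw [← card_filter_sq_eq hF]
  congr 1
  refine card_nbij' (fun β => 2 * β - t) (fun u => (u + t) / 2) ?_ ?_ ?_ ?_ <;> intro x hx <;>
    simp only [coe_filter, mem_univ, true_and, Set.mem_ofPred_eq] at hx ⊢
  · obtain ⟨hx0, hxt⟩ := hx
    rw [← hxt]; field_simp; ring
  · set β := (x + t) / 2 with hβ_def
    have hx_eq : x = 2 * β - t := by rw [hβ_def]; field_simp; ring
    rw [hx_eq] at hx
    have hβ : β * (t - β) = 1 :=
      mul_left_cancel₀ (mul_ne_zero h2 h2) (by linear_combination -hx)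
    refine ⟨left_ne_zero_of_mul_eq_one hβ, ?_⟩
    rw [inv_eq_of_mul_eq_one_right hβ]
    ring
  · field_simp; ring
  · field_simp; ring

end QuadraticCount

section Character

theorem ZMod.two_sub_stdAddChar_sub_stdAddChar_neg (m : ZMod 3) :
    2 - ZMod.stdAddChar m - ZMod.stdAddChar (-m) = if m = 0 then 0 else 3 := by
  have hsum := AddChar.sum_mulShift m (ZMod.isPrimitive_stdAddChar 3)
  have hexpand : ∑ x : ZMod 3, ZMod.stdAddChar (x * m) =
      ZMod.stdAddChar ((0 : ZMod 3) * m) + ZMod.stdAddChar ((1 : ZMod 3) * m) +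
        ZMod.stdAddChar ((-1 : ZMod 3) * m) := Fin.sum_univ_three _
  rw [hexpand, zero_mul, one_mul, neg_one_mul, AddChar.map_zero_eq_one] at hsum
  rw [ZMod.card] at hsum
  split_ifs at hsum ⊢ <;> push_cast at hsum <;> linear_combination -hsum

variable {r : ℕ}

def lamChar (r : ℕ) : AddChar (Fq r) ℂ :=
  ZMod.stdAddChar.compAddMonoidHom (Algebra.trace (ZMod 3) (Fq r)).toAddMonoidHom

theorem lamChar_apply (x : Fq r) : lamChar r x = lam r x := by
  simp [lamChar, lam, ZMod.stdAddChar_apply, ZMod.toCircle_apply]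

theorem isPrimitive_lamChar : (lamChar r).IsPrimitive := by
  refine AddChar.IsPrimitive.of_ne_one fun h => ?_
  obtain ⟨x, hx⟩ := Algebra.trace_surjective (ZMod 3) (Fq r) 1
  have h1 : ZMod.stdAddChar (N := 3) 1 = ZMod.stdAddChar (N := 3) 0 := by
    simpa [lamChar, hx] using DFunLike.congr_fun h x
  exact one_ne_zero (ZMod.injective_stdAddChar h1)

theorem sum_lam_mul {c : Fq r} (hc : c ≠ 0) : ∑ t, lam r (c * t) = 0 := by
  simpa [← lamChar_apply, mul_comm, hc] using AddChar.sum_mulShift c (isPrimitive_lamChar (r := r))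

theorem three_mul_card_filter_trace_ne_zero {ι : Type*} (s : Finset ι) (g : ι → Fq r) :
    3 * (#{i ∈ s | Algebra.trace (ZMod 3) (Fq r) (g i) ≠ 0} : ℂ) =
      2 * #s - ∑ i ∈ s, lam r (g i) - ∑ i ∈ s, lam r (-g i) := by
  have hpoint (i : ι) : 2 - lam r (g i) - lam r (-g i) =
      if Algebra.trace (ZMod 3) (Fq r) (g i) ≠ 0 then 3 else 0 := by
    simp only [← lamChar_apply, lamChar, AddChar.compAddMonoidHom_apply,
      LinearMap.toAddMonoidHom_coe, map_neg, ZMod.two_sub_stdAddChar_sub_stdAddChar_neg, ite_not]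
  calc 3 * (#{i ∈ s | Algebra.trace (ZMod 3) (Fq r) (g i) ≠ 0} : ℂ)
      = ∑ i ∈ s, if Algebra.trace (ZMod 3) (Fq r) (g i) ≠ 0 then (3 : ℂ) else 0 := by
        rw [sum_ite, sum_const_zero, sum_const, nsmul_eq_mul, add_zero, mul_comm]
    _ = ∑ i ∈ s, (2 - lam r (g i) - lam r (-g i)) := sum_congr rfl fun i _ => (hpoint i).symm
    _ = 2 * #s - ∑ i ∈ s, lam r (g i) - ∑ i ∈ s, lam r (-g i) := by
        rw [sum_sub_distrib, sum_sub_distrib, sum_const, nsmul_eq_mul, mul_comm]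

end Character

section OrthogonalMinus

variable {r : ℕ} {ε : Fq r}

theorem Fq.three_eq_zero : (3 : Fq r) = 0 := by
  exact_mod_cast CharP.cast_eq_zero (Fq r) 3

theorem Fq.ringChar_ne_two : ringChar (Fq r) ≠ 2 := by
  rw [ringChar.eq (Fq r) 3]; decide

theorem mem_SOminus2 {w : Matrix (Fin 2) (Fin 2) (Fq r)} :
    w ∈ SOminus2 r ε ↔ ∃ x b : Fq r, x ^ 2 - ε * b ^ 2 = 1 ∧ w = !![x, b * ε; b, x] := by
  simp [SOminus2]

theorem mem_SOminus2_and_trace_eq_iff {w : Matrix (Fin 2) (Fin 2) (Fq r)} {t : Fq r} :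
    w ∈ SOminus2 r ε ∧ w.trace = t ↔
      ∃ b : Fq r, ε * b ^ 2 = t ^ 2 - 4 ∧ w = !![-t, b * ε; b, -t] := by
  have h3 : (3 : Fq r) = 0 := Fq.three_eq_zero
  rw [mem_SOminus2]
  constructor
  · rintro ⟨⟨x, b, hxb, rfl⟩, ht⟩
    rw [trace_fin_two_of] at ht
    have hx : x = -t := by linear_combination -ht + x * h3
    subst hx
    exact ⟨b, by linear_combination -hxb + h3, rfl⟩
  · rintro ⟨b, hb, rfl⟩
    refine ⟨⟨-t, b, by linear_combination -hb + h3, rfl⟩, ?_⟩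
    rw [trace_fin_two_of]
    linear_combination -t * h3

theorem card_filter_SOminus2_trace_eq (t : Fq r) :
    #{w ∈ SOminus2 r ε | w.trace = t} = #{b : Fq r | ε * b ^ 2 = t ^ 2 - 4} := by
  have hinj : Function.Injective fun b : Fq r => !![-t, b * ε; b, -t] :=
    fun b b' h => by simpa using congrFun (congrFun h 1) 0
  rw [← card_image_of_injective _ hinj]
  congr 1
  ext w
  rw [mem_filter, mem_SOminus2_and_trace_eq_iff]
  simp only [mem_image, mem_filter, mem_univ, true_and, eq_comm]

theorem card_filter_SOminus2_trace_add_card_filter_add_inv (hε : ¬IsSquare ε) (t : Fq r) :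
    #{w ∈ SOminus2 r ε | w.trace = t} + #{β : Fq r | β ≠ 0 ∧ β + β⁻¹ = t} = 2 := by
  have hε0 : ε ≠ 0 := fun h => hε (h ▸ IsSquare.zero)
  have hχ : quadraticChar (Fq r) ε = -1 := quadraticChar_neg_one_iff_not_isSquare.mpr hε
  have h := congrArg₂ (· + ·)
    (card_filter_mul_sq_eq Fq.ringChar_ne_two hε0 (t ^ 2 - 4))
    (card_filter_add_inv_eq Fq.ringChar_ne_two t)
  rw [map_mul, hχ, ← card_filter_SOminus2_trace_eq] at h
  zify
  linear_combination h

theorem sum_SOminus2_add_sum_add_inv (hε : ¬IsSquare ε) (f : Fq r → ℂ) :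
    ∑ w ∈ SOminus2 r ε, f w.trace + ∑ β ∈ {β : Fq r | β ≠ 0}, f (β + β⁻¹) =
      2 * ∑ t, f t := by
  rw [← sum_fiberwise' (SOminus2 r ε) trace f, ← sum_fiberwise' _ (fun β => β + β⁻¹) f,
    ← sum_add_distrib, mul_sum]
  refine sum_congr rfl fun t _ => ?_
  rw [sum_const, sum_const, ← add_nsmul, filter_filter,
    card_filter_SOminus2_trace_add_card_filter_add_inv hε, two_nsmul, two_mul]

theorem Kl_sq_eq_sum {c : Fq r} (hc : c ≠ 0) :
    Kl r (c ^ 2) = ∑ β ∈ {β : Fq r | β ≠ 0}, lam r (c * (β + β⁻¹)) := by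
  refine sum_nbij' (c⁻¹ * ·) (c * ·) ?_ ?_ ?_ ?_ ?_ <;> intro x hx <;>
    simp only [mem_filter, mem_univ, true_and] at hx ⊢
  · exact mul_ne_zero (inv_ne_zero hc) hx
  · exact mul_ne_zero hc hx
  · field_simp
  · field_simp
  · congr 1
    field_simp

theorem sum_SOminus2_lam_mul_trace (hε : ¬IsSquare ε) {c : Fq r} (hc : c ≠ 0) :
    ∑ w ∈ SOminus2 r ε, lam r (c * w.trace) = -Kl r (c ^ 2) := by
  have h := sum_SOminus2_add_sum_add_inv hε (fun t => lam r (c * t))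
  rw [sum_lam_mul hc, ← Kl_sq_eq_sum hc] at h
  linear_combination h

theorem card_SOminus2 (hr : 0 < r) (hε : ¬IsSquare ε) : #(SOminus2 r ε) = 3 ^ r + 1 := by
  have hq : #{β : Fq r | β ≠ 0} + 1 = 3 ^ r := by
    rw [filter_ne', card_erase_add_one (mem_univ _), card_univ, ← Nat.card_eq_fintype_card,
      GaloisField.card 3 r hr.ne']
  have h : ((#(SOminus2 r ε) + #{β : Fq r | β ≠ 0} : ℕ) : ℂ) = (2 * 3 ^ r : ℕ) := by
    simpa [← Nat.card_eq_fintype_card, GaloisField.card 3 r hr.ne'] using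
      sum_SOminus2_add_sum_add_inv hε (fun _ => 1)
  have := Nat.cast_injective h
  omega

theorem three_mul_card_filter_SOminus2 (hr : 0 < r) (hε : ¬IsSquare ε) {a : Fq r} (ha : a ≠ 0) :
    (3 : ℂ) * #{w ∈ SOminus2 r ε | Algebra.trace (ZMod 3) (Fq r) (a * w.trace) ≠ 0} =
      2 * (3 ^ r + 1 + Kl r (a ^ 2)) := by
  rw [three_mul_card_filter_trace_ne_zero, card_SOminus2 hr hε]
  simp only [← neg_mul]
  rw [sum_SOminus2_lam_mul_trace hε ha, sum_SOminus2_lam_mul_trace hε (neg_ne_zero.mpr ha), neg_sq]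
  push_cast
  ring

theorem SOminus2_subset_Ominus2 : SOminus2 r ε ⊆ Ominus2 r ε := by
  intro w hw
  obtain ⟨x, b, h, rfl⟩ := mem_SOminus2.mp hw
  refine mem_filter.mpr ⟨mem_univ _, ?_, ?_⟩
  · rw [det_fin_two_of, show x * x - b * ε * b = 1 by linear_combination h]
    exact isUnit_one
  · ext i j
    fin_cases i <;> fin_cases j <;>
      simp only [deltaEps, Fin.zero_eta, Fin.mk_one, Fin.isValue, mul_apply, transpose_apply,
        of_apply, cons_val', cons_val_zero, cons_val_one, cons_val_fin_one, Fin.sum_univ_two,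
        mul_one, mul_zero, add_zero, mul_neg, zero_add, neg_mul]
    · linear_combination h
    · ring
    · ring
    · linear_combination (-ε) * h

theorem mem_SOminus2_of_mem_Ominus2 (hε : ε ≠ 0) {w : Matrix (Fin 2) (Fin 2) (Fq r)}
    (hw : w ∈ Ominus2 r ε) (htr : w.trace ≠ 0) : w ∈ SOminus2 r ε := by
  have heq := (mem_filter.mp hw).2.2
  obtain ⟨p, q, s, u, rfl⟩ : ∃ p q s u, w = !![p, q; s, u] := ⟨_, _, _, _, eta_fin_two w⟩
  have entry (i j : Fin 2) := congrFun (congrFun heq i) j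
  have h00 := entry 0 0
  have h01 := entry 0 1
  have h11 := entry 1 1
  simp only [deltaEps, Fin.isValue, mul_apply, transpose_apply, of_apply, cons_val',
    cons_val_zero, cons_val_one, cons_val_fin_one, Fin.sum_univ_two, mul_one, mul_zero, add_zero,
    mul_neg, zero_add, neg_mul] at h00 h01 h11
  have hdet : (p * u - q * s) ^ 2 = 1 := by
    have h := congrArg det heq
    rw [det_mul, det_mul, det_transpose, det_fin_two_of, deltaEps, det_fin_two_of] at h
    exact mul_right_cancel₀ (neg_ne_zero.mpr hε) (by linear_combination h)
  have hu : p * (p * u - q * s) = u := by linear_combination u * h00 - s * h01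
  have hq : q * (p * u - q * s) = ε * s := by linear_combination u * h01 - s * h11
  rcases sq_eq_one_iff.mp hdet with hD | hD
  · rw [hD, mul_one] at hu hq
    exact mem_SOminus2.mpr ⟨p, s, by linear_combination h00, by rw [hu, hq, mul_comm]⟩
  · rw [hD] at hu
    exact absurd (by rw [trace_fin_two_of]; linear_combination -hu) htr

theorem filter_Ominus2_eq_filter_SOminus2 (hε : ε ≠ 0)
    {P : Matrix (Fin 2) (Fin 2) (Fq r) → Prop} [DecidablePred P]
    (hP : ∀ w, P w → w.trace ≠ 0) :
    (Ominus2 r ε).filter P = (SOminus2 r ε).filter P := by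
  ext w
  simp only [mem_filter]
  exact ⟨fun ⟨hw, hPw⟩ => ⟨mem_SOminus2_of_mem_Ominus2 hε hw (hP w hPw), hPw⟩,
    fun ⟨hw, hPw⟩ => ⟨SOminus2_subset_Ominus2 hw, hPw⟩⟩

end OrthogonalMinus

theorem stmt18 (r : ℕ) (hr : 0 < r) (ε : Fq r) (hε : ¬ IsSquare ε)
    (a : Fq r) (ha : a ≠ 0) :
    (3 : ℂ) * (((SOminus2 r ε).filter
        (fun w => Algebra.trace (ZMod 3) (Fq r) (a * w.trace) ≠ 0)).card : ℂ) =
      2 * ((3 : ℂ) ^ r + 1 + Kl r (a ^ 2))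
    ∧ (3 : ℂ) * (((Ominus2 r ε).filter
        (fun w => Algebra.trace (ZMod 3) (Fq r) (a * w.trace) ≠ 0)).card : ℂ) =
      2 * ((3 : ℂ) ^ r + 1 + Kl r (a ^ 2)) := by
  have hε0 : ε ≠ 0 := fun h => hε (h ▸ IsSquare.zero)
  have hSO := three_mul_card_filter_SOminus2 hr hε ha
  refine ⟨hSO, ?_⟩
  rwa [filter_Ominus2_eq_filter_SOminus2 hε0 fun w hw htr => hw (by rw [htr, mul_zero, map_zero])]
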